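/- Let W be a nonempty finite set of positive integers, and let A = ℕ \ W (the positive integers not in W). Then A generates the additive group ℤ and S_A(2) = W ∪ (−W), so the pair (ℤ, A) has phase transition (2, 2|W|). -/

import Mathlib

/-! For `A = ℕ₊ \ W` with `W` finite, every integer of absolute value at least some `m` lies in
`A ∪ -A`. Hence `1 = (m + 1) - m` lies in the subgroup generated by `A`, and every `w ∈ W ∪ -W`
is a sum `(w ± m) ∓ m` of two signed generators. Since `W ∪ -W` is exactly the set of nonzero
integers outside `A ∪ -A`, it is the sphere of radius 2, and no integer has length above 2. -/

noncomputable def addWordLength {G : Type*} [AddGroup G] (A : Set G) (x : G) : ℕ :=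
  sInf {n : ℕ | ∃ l : List G, l.length = n ∧ (∀ g ∈ l, g ∈ A ∪ (-A)) ∧ l.sum = x}

section AddGroup

variable {G : Type*} [AddGroup G] {A : Set G} {x : G}

theorem addWordLength_le {l : List G} (hl : ∀ g ∈ l, g ∈ A ∪ -A) :
    addWordLength A l.sum ≤ l.length :=
  Nat.sInf_le ⟨l, rfl, hl, rfl⟩

theorem exists_word_of_addWordLength_ne_zero (h : addWordLength A x ≠ 0) :
    ∃ l : List G, l.length = addWordLength A x ∧ (∀ g ∈ l, g ∈ A ∪ -A) ∧ l.sum = x := by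
  refine Nat.sInf_mem (s := {n | ∃ l : List G, l.length = n ∧ (∀ g ∈ l, g ∈ A ∪ -A) ∧ l.sum = x})
    (Set.nonempty_iff_ne_empty.2 fun hempty => h ?_)
  rw [addWordLength, hempty, Nat.sInf_empty]

theorem addWordLength_zero : addWordLength A 0 = 0 :=
  Nat.le_zero.1 (addWordLength_le (l := []) (by simp))

theorem addWordLength_ne_one (hx : x ∉ A ∪ -A) : addWordLength A x ≠ 1 := by
  intro h
  obtain ⟨l, hlen, hl, rfl⟩ := exists_word_of_addWordLength_ne_zero (h ▸ one_ne_zero)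
  obtain ⟨g, rfl⟩ := List.length_eq_one_iff.1 (hlen.trans h)
  exact hx (by simpa using hl)

theorem addWordLength_sum_ne_zero {l : List G} (hl : ∀ g ∈ l, g ∈ A ∪ -A) (h0 : l.sum ≠ 0) :
    addWordLength A l.sum ≠ 0 := by
  intro h
  obtain hzero | hempty := Nat.sInf_eq_zero.1 h
  · obtain ⟨l', hlen, -, hsum⟩ := hzero
    rw [List.length_eq_zero_iff] at hlen
    exact h0 (by simpa [hlen] using hsum.symm)
  · exact hempty.subset ⟨l, rfl, hl, rfl⟩

theorem addWordLength_eq_one (hx : x ∈ A ∪ -A) (h0 : x ≠ 0) : addWordLength A x = 1 := by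
  have hle := addWordLength_le (l := [x]) (by simpa using hx)
  have hne := addWordLength_sum_ne_zero (l := [x]) (by simpa using hx) (by simpa using h0)
  simp only [List.sum_singleton, List.length_singleton] at hle hne
  omega

theorem addWordLength_add_eq_two {a b : G} (ha : a ∈ A ∪ -A) (hb : b ∈ A ∪ -A)
    (hab : a + b ∉ A ∪ -A) (h0 : a + b ≠ 0) : addWordLength A (a + b) = 2 := by
  have hl : ∀ g ∈ [a, b], g ∈ A ∪ -A := fun g hg => by
    rcases List.mem_pair.1 hg with rfl | rfl <;> assumption
  have hle := addWordLength_le hl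
  have hne := addWordLength_sum_ne_zero hl (by simpa using h0)
  have hne1 := addWordLength_ne_one hab
  simp only [List.sum_cons, List.sum_nil, add_zero, List.length_cons, List.length_nil] at hle hne
  omega

end AddGroup

section CofiniteInPositive

variable {W : Set ℤ}

theorem mem_pos_diff_union_neg_iff (hWpos : W ⊆ {n : ℤ | 0 < n}) {x : ℤ} :
    x ∈ {n : ℤ | 0 < n} \ W ∪ -({n : ℤ | 0 < n} \ W) ↔ x ≠ 0 ∧ x ∉ W ∪ -W := by
  have hx := @hWpos x
  have hnx := @hWpos (-x)
  simp only [Set.mem_union, Set.mem_sdiff, Set.mem_neg, Set.mem_ofPred_eq] at hx hnx ⊢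
  constructor
  · rintro (⟨hpos, hxW⟩ | ⟨hneg, hxW⟩)
    · exact ⟨by omega, fun h => h.elim hxW fun h' => by have := hnx h'; omega⟩
    · exact ⟨by omega, fun h => h.elim (fun h' => by have := hx h'; omega) hxW⟩
  · rintro ⟨h0, hxW⟩
    rcases lt_or_gt_of_ne h0 with hneg | hpos
    · exact Or.inr ⟨by omega, fun h => hxW (Or.inr h)⟩
    · exact Or.inl ⟨hpos, fun h => hxW (Or.inl h)⟩

theorem exists_forall_ge_mem_pos_diff (hW : BddAbove W) :
    ∃ m : ℤ, ∀ n, m ≤ n → n ∈ {n : ℤ | 0 < n} \ W := by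
  obtain ⟨M, hM⟩ := hW
  refine ⟨max M 0 + 1, fun n hn => ⟨?_, fun hnW => ?_⟩⟩
  · simp only [Set.mem_ofPred_eq]; omega
  · have := hM hnW; omega

theorem addSubgroup_closure_pos_diff_eq_top (hW : BddAbove W) :
    AddSubgroup.closure ({n : ℤ | 0 < n} \ W) = ⊤ := by
  obtain ⟨m, hm⟩ := exists_forall_ge_mem_pos_diff hW
  have hone : (1 : ℤ) ∈ AddSubgroup.closure ({n : ℤ | 0 < n} \ W) := by
    simpa using AddSubgroup.sub_mem _ (AddSubgroup.subset_closure (hm (m + 1) (by omega)))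
      (AddSubgroup.subset_closure (hm m le_rfl))
  rw [eq_top_iff, ← Int.zmultiples_one]
  exact AddSubgroup.zmultiples_le_of_mem hone

theorem addWordLength_pos_diff_eq_two (hWpos : W ⊆ {n : ℤ | 0 < n}) (hW : BddAbove W) {x : ℤ}
    (hx : x ∈ W ∪ -W) : addWordLength ({n : ℤ | 0 < n} \ W) x = 2 := by
  obtain ⟨m, hm⟩ := exists_forall_ge_mem_pos_diff hW
  have hbig : ∀ n, m ≤ |n| → n ∈ {n : ℤ | 0 < n} \ W ∪ -({n : ℤ | 0 < n} \ W) := by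
    intro n hn
    rcases abs_cases n with ⟨habs, -⟩ | ⟨habs, -⟩
    · exact Or.inl (hm n (habs ▸ hn))
    · exact Or.inr (hm (-n) (habs ▸ hn))
  have hm0 : 0 < m := (hm m le_rfl).1
  have hx0 : x ≠ 0 := by
    rcases hx with hx | hx
    · exact (hWpos hx).ne'
    · have : 0 < -x := hWpos hx
      omega
  have hxA := mt (mem_pos_diff_union_neg_iff hWpos).1 (fun h => h.2 hx)
  obtain ⟨a, b, ha, hb, rfl⟩ : ∃ a b : ℤ, m ≤ |a| ∧ m ≤ |b| ∧ a + b = x := by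
    rcases lt_or_gt_of_ne hx0 with hneg | hpos
    · exact ⟨x - m, m, by rw [abs_of_neg (by omega)]; omega, by rw [abs_of_pos hm0], by ring⟩
    · exact ⟨x + m, -m, by rw [abs_of_pos (by omega)]; omega, by rw [abs_neg, abs_of_pos hm0],
        by ring⟩
  exact addWordLength_add_eq_two (hbig a ha) (hbig b hb) hxA hx0

open Classical in
theorem addWordLength_pos_diff (hWpos : W ⊆ {n : ℤ | 0 < n}) (hW : BddAbove W) (x : ℤ) :
    addWordLength ({n : ℤ | 0 < n} \ W) x = if x ∈ W ∪ -W then 2 else if x = 0 then 0 else 1 := by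
  split_ifs with hx h0
  · exact addWordLength_pos_diff_eq_two hWpos hW hx
  · subst h0
    exact addWordLength_zero
  · exact addWordLength_eq_one ((mem_pos_diff_union_neg_iff hWpos).2 ⟨h0, hx⟩) h0

theorem ncard_union_neg_of_subset_pos (hWpos : W ⊆ {n : ℤ | 0 < n}) (hW : W.Finite) :
    (W ∪ -W).ncard = 2 * W.ncard := by
  have hdisj : Disjoint W (-W) := Set.disjoint_left.2 fun x hx hnx => by
    have := hWpos hx
    have := hWpos hnx
    simp only [Set.mem_ofPred_eq] at *
    omega
  rw [Set.ncard_union_eq hdisj hW hW.neg, Set.ncard_neg, two_mul]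

end CofiniteInPositive

theorem stmt17_general (W : Set ℤ) (hWpos : W ⊆ {n : ℤ | 0 < n}) (hWfin : W.Finite)
    (A : Set ℤ) (hA : A = {n : ℤ | 0 < n} \ W) :
    AddSubgroup.closure A = ⊤ ∧
    {x : ℤ | addWordLength A x = 2} = W ∪ (-W) ∧
    (∀ r : ℕ, 2 < r → {x : ℤ | addWordLength A x = r} = ∅) ∧
    Nat.card {x : ℤ | addWordLength A x = 2} = 2 * W.ncard := by
  subst hA
  have hlength := addWordLength_pos_diff hWpos hWfin.bddAbove
  have hsphere : {x : ℤ | addWordLength ({n : ℤ | 0 < n} \ W) x = 2} = W ∪ -W := by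
    ext x
    rw [Set.mem_ofPred_eq, hlength]
    split_ifs <;> simp_all
  refine ⟨addSubgroup_closure_pos_diff_eq_top hWfin.bddAbove, hsphere, fun r hr => ?_, ?_⟩
  · refine Set.eq_empty_of_forall_notMem fun x hx => ?_
    rw [Set.mem_ofPred_eq, hlength] at hx
    split_ifs at hx <;> omega
  · rw [hsphere, Nat.card_coe_set_eq, ncard_union_neg_of_subset_pos hWpos hWfin]

theorem stmt17 (W : Set ℤ) (hWpos : W ⊆ {n : ℤ | 0 < n}) (hWfin : W.Finite)
    (hWne : W.Nonempty)
    (A : Set ℤ) (hA : A = {n : ℤ | 0 < n} \ W) :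
    AddSubgroup.closure A = ⊤ ∧
    {x : ℤ | addWordLength A x = 2} = W ∪ (-W) ∧
    (∀ r : ℕ, 2 < r → {x : ℤ | addWordLength A x = r} = ∅) ∧
    Nat.card {x : ℤ | addWordLength A x = 2} = 2 * W.ncard :=
  stmt17_general W hWpos hWfin A hA
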